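/- arXiv:1707.02522 — 2 statements merged into one kernel-verified Lean document; each statement's English description precedes it below -/
import Mathlib

section
/- The coherence monotone C_max is faithful: for every state ρ, C_max(ρ) ≥ 0, and C_max(ρ) = 0 if and only if ρ is incoherent. -/
open scoped Matrix ComplexOrder

namespace OneShot

variable {ι κ : Type*} [Fintype ι] [DecidableEq ι] [Fintype κ] [DecidableEq κ]

/-- A quantum state: a positive semidefinite matrix with unit trace. -/
def IsState (ρ : Matrix ι ι ℂ) : Prop := ρ.PosSemidef ∧ ρ.trace = 1

/-- An incoherent state: a state that is diagonal in the computational basis. -/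
def IsIncoherent (ρ : Matrix ι ι ℂ) : Prop := IsState ρ ∧ ρ.IsDiag

/-- The completely dephasing channel `Δ`. -/
def dephase (ρ : Matrix ι ι ℂ) : Matrix ι ι ℂ := Matrix.diagonal fun i => ρ i i

/-- The max-relative entropy of coherence
`C_max(ρ) = min_{δ ∈ 𝓘} D_max(ρ‖δ) = log₂ min {λ ≥ 0 | ∃ δ ∈ 𝓘, ρ ≤ λ δ}`. -/
noncomputable def Cmax (ρ : Matrix ι ι ℂ) : ℝ :=
  Real.logb 2 (sInf {l : ℝ | 0 ≤ l ∧ ∃ δ, IsIncoherent δ ∧ (l • δ - ρ).PosSemidef})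

/-- `C_{Δ,max}(ρ) = log₂ min {λ ≥ 0 | ρ ≤ λ Δ(ρ)}`. -/
noncomputable def CDmax (ρ : Matrix ι ι ℂ) : ℝ :=
  Real.logb 2 (sInf {l : ℝ | 0 ≤ l ∧ (l • dephase ρ - ρ).PosSemidef})

/-- Complete positivity of a linear map on matrices. -/
def CompletelyPositive (Λ : Matrix ι ι ℂ →ₗ[ℂ] Matrix κ κ ℂ) : Prop :=
  ∀ (k : ℕ) (M : Matrix (Fin k × ι) (Fin k × ι) ℂ), M.PosSemidef →
    (Matrix.of fun p q : Fin k × κ =>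
      Λ (Matrix.of fun x y => M (p.1, x) (q.1, y)) p.2 q.2).PosSemidef

/-- Trace preservation. -/
def TracePreserving (Λ : Matrix ι ι ℂ →ₗ[ℂ] Matrix κ κ ℂ) : Prop :=
  ∀ A, (Λ A).trace = A.trace

/-- A maximally incoherent operation (MIO): a CPTP map sending every incoherent state
to an incoherent state. -/
def IsMIO (Λ : Matrix ι ι ℂ →ₗ[ℂ] Matrix κ κ ℂ) : Prop :=
  CompletelyPositive Λ ∧ TracePreserving Λ ∧ ∀ δ, IsIncoherent δ → IsIncoherent (Λ δ)

/-- A dephasing-covariant incoherent operation (DIO): a CPTP map commuting with `Δ`. -/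
def IsDIO (Λ : Matrix ι ι ℂ →ₗ[ℂ] Matrix ι ι ℂ) : Prop :=
  CompletelyPositive Λ ∧ TracePreserving Λ ∧ ∀ ρ, Λ (dephase ρ) = dephase (Λ ρ)

/-- An incoherent-preserving (Kraus) operator: `K δ Kᴴ` is a nonnegative multiple of an
incoherent state, for every incoherent state `δ`. -/
def IncoherentPreserving (K : Matrix κ ι ℂ) : Prop :=
  ∀ δ : Matrix ι ι ℂ, IsIncoherent δ →
    ∃ c : ℝ, 0 ≤ c ∧ ∃ δ' : Matrix κ κ ℂ, IsIncoherent δ' ∧ K * δ * Kᴴ = (c : ℂ) • δ'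

/-- An incoherent operation (IO). -/
def IsIO (Λ : Matrix ι ι ℂ →ₗ[ℂ] Matrix κ κ ℂ) : Prop :=
  ∃ (N : ℕ) (K : Fin N → Matrix κ ι ℂ),
    (∀ n, IncoherentPreserving (K n)) ∧ (∑ n, (K n)ᴴ * K n = 1) ∧
    ∀ ρ, Λ ρ = ∑ n, K n * ρ * (K n)ᴴ

/-- A strictly incoherent operation (SIO). -/
def IsSIO (Λ : Matrix ι ι ℂ →ₗ[ℂ] Matrix κ κ ℂ) : Prop :=
  ∃ (N : ℕ) (K : Fin N → Matrix κ ι ℂ),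
    (∀ n, IncoherentPreserving (K n)) ∧ (∀ n, IncoherentPreserving (K n)ᴴ) ∧
    (∑ n, (K n)ᴴ * K n = 1) ∧ ∀ ρ, Λ ρ = ∑ n, K n * ρ * (K n)ᴴ

/-- The outer product `|ψ⟩⟨ψ|`. -/
def outer (ψ : ι → ℂ) : Matrix ι ι ℂ := Matrix.of fun i j => ψ i * star (ψ j)

/-- `T ψ` is the number of nonzero computational-basis coefficients of `ψ`. -/
noncomputable def T (ψ : ι → ℂ) : ℕ := (Finset.univ.filter fun i => ψ i ≠ 0).card

/-- A finite pure-state decomposition `ρ = Σ_j p_j |ψ_j⟩⟨ψ_j|`. -/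
def IsDecomposition (ρ : Matrix ι ι ℂ) (n : ℕ) (p : Fin n → ℝ) (ψ : Fin n → ι → ℂ) : Prop :=
  (∀ j, 0 < p j) ∧ (∑ j, p j = 1) ∧ (∀ j, ∑ i, Complex.normSq (ψ j i) = 1) ∧
    ρ = ∑ j, p j • outer (ψ j)

/-- `C_0(ρ) = min over decompositions of max_j log₂ T(ψ_j)`. -/
noncomputable def C0 (ρ : Matrix ι ι ℂ) : ℝ :=
  sInf { r | ∃ n p ψ, IsDecomposition ρ n p ψ ∧
    r = Real.logb 2 (↑(Finset.univ.sup fun j => T (ψ j)) : ℝ) }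

/-- Matrix square root of a positive semidefinite matrix (junk value `0` elsewhere). -/
noncomputable def msqrt (A : Matrix ι ι ℂ) : Matrix ι ι ℂ :=
  letI := Classical.propDecidable A.PosSemidef
  if h : A.PosSemidef then
    (h.1.eigenvectorUnitary : Matrix ι ι ℂ) *
      Matrix.diagonal ((↑) ∘ Real.sqrt ∘ h.1.eigenvalues) *
      (star h.1.eigenvectorUnitary : Matrix ι ι ℂ)
  else 0

/-- Uhlmann fidelity `F(ρ,σ) = (Tr √(√ρ σ √ρ))²`. -/
noncomputable def Fid (ρ σ : Matrix ι ι ℂ) : ℝ :=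
  ((msqrt (msqrt ρ * σ * msqrt ρ)).trace.re) ^ 2

/-- Smoothed `C_max`. -/
noncomputable def Cmaxeps (ρ : Matrix ι ι ℂ) (ε : ℝ) : ℝ :=
  sInf { r | ∃ ρ', IsState ρ' ∧ 1 - ε ≤ Fid ρ ρ' ∧ r = Cmax ρ' }

/-- Smoothed `C_{Δ,max}`. -/
noncomputable def CDmaxeps (ρ : Matrix ι ι ℂ) (ε : ℝ) : ℝ :=
  sInf { r | ∃ ρ', IsState ρ' ∧ 1 - ε ≤ Fid ρ ρ' ∧ r = CDmax ρ' }

/-- Smoothed `C_0`. -/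
noncomputable def C0eps (ρ : Matrix ι ι ℂ) (ε : ℝ) : ℝ :=
  sInf { r | ∃ ρ', IsState ρ' ∧ 1 - ε ≤ Fid ρ ρ' ∧ r = C0 ρ' }

/-- The maximally coherent state `Ψ_M = |Ψ_M⟩⟨Ψ_M|` of dimension `M`. -/
noncomputable def PsiM (M : ℕ) : Matrix (Fin M) (Fin M) ℂ := Matrix.of fun _ _ => (1 : ℂ) / M

/-- One-shot coherence cost under MIO. -/
noncomputable def CMIOeps (ρ : Matrix ι ι ℂ) (ε : ℝ) : ℝ :=
  sInf { r | ∃ M : ℕ, 1 ≤ M ∧ r = Real.logb 2 M ∧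
    ∃ Λ : Matrix (Fin M) (Fin M) ℂ →ₗ[ℂ] Matrix ι ι ℂ, IsMIO Λ ∧ 1 - ε ≤ Fid ρ (Λ (PsiM M)) }

/-- One-shot coherence cost under DIO. -/
noncomputable def CDIOeps (ρ : Matrix ι ι ℂ) (ε : ℝ) : ℝ :=
  sInf { r | ∃ M : ℕ, 1 ≤ M ∧ r = Real.logb 2 M ∧
    ∃ Λ : Matrix (Fin M) (Fin M) ℂ →ₗ[ℂ] Matrix ι ι ℂ,
      CompletelyPositive Λ ∧ TracePreserving Λ ∧ (∀ ω, Λ (dephase ω) = dephase (Λ ω)) ∧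
      1 - ε ≤ Fid ρ (Λ (PsiM M)) }

/-- One-shot coherence cost under IO. -/
noncomputable def CIOeps (ρ : Matrix ι ι ℂ) (ε : ℝ) : ℝ :=
  sInf { r | ∃ M : ℕ, 1 ≤ M ∧ r = Real.logb 2 M ∧
    ∃ Λ : Matrix (Fin M) (Fin M) ℂ →ₗ[ℂ] Matrix ι ι ℂ, IsIO Λ ∧ 1 - ε ≤ Fid ρ (Λ (PsiM M)) }

/-- One-shot coherence cost under SIO. -/
noncomputable def CSIOeps (ρ : Matrix ι ι ℂ) (ε : ℝ) : ℝ :=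
  sInf { r | ∃ M : ℕ, 1 ≤ M ∧ r = Real.logb 2 M ∧
    ∃ Λ : Matrix (Fin M) (Fin M) ℂ →ₗ[ℂ] Matrix ι ι ℂ, IsSIO Λ ∧ 1 - ε ≤ Fid ρ (Λ (PsiM M)) }

/-- Matrix logarithm (base 2) via the spectral decomposition, with `log₂ 0 = 0` junk
convention on the kernel, and junk value `0` on non-Hermitian matrices. -/
noncomputable def mlog2 (A : Matrix ι ι ℂ) : Matrix ι ι ℂ :=
  letI := Classical.propDecidable A.IsHermitian
  if h : A.IsHermitian then
    (h.eigenvectorUnitary : Matrix ι ι ℂ) *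
      Matrix.diagonal (fun i => (Real.logb 2 (h.eigenvalues i) : ℂ)) *
      (h.eigenvectorUnitary : Matrix ι ι ℂ)ᴴ
  else 0

/-- The relative entropy of coherence `C_r(ρ) = min_{δ ∈ 𝓘} S(ρ‖δ)`, where the minimum
is (equivalently) restricted to those `δ` whose support contains the support of `ρ`,
on which `S(ρ‖δ) = Tr[ρ (log₂ ρ − log₂ δ)]` is finite. -/
noncomputable def Cr (ρ : Matrix ι ι ℂ) : ℝ :=
  sInf { r | ∃ δ, IsIncoherent δ ∧ (∀ v : ι → ℂ, δ.mulVec v = 0 → ρ.mulVec v = 0) ∧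
    r = ((ρ * (mlog2 ρ - mlog2 δ)).trace).re }

/-- Von Neumann entropy (base 2). -/
noncomputable def vN (σ : Matrix ι ι ℂ) : ℝ := -((σ * mlog2 σ).trace.re)

/-- The coherence of formation. -/
noncomputable def Cf (ρ : Matrix ι ι ℂ) : ℝ :=
  sInf { r | ∃ n p ψ, IsDecomposition ρ n p ψ ∧
    r = ∑ j, p j * vN (dephase (outer (ψ j))) }

/-- The set `A_ρ = { (1/t)[(1+t)Δ(ρ) − ρ] : t > 0, (1+t)Δ(ρ) − ρ ≥ 0 }`. -/
def Aset (ρ : Matrix ι ι ℂ) : Set (Matrix ι ι ℂ) :=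
  { σ | ∃ t : ℝ, 0 < t ∧ ((1 + t) • dephase ρ - ρ).PosSemidef ∧
      σ = t⁻¹ • ((1 + t) • dephase ρ - ρ) }

/-- The `n`-fold tensor power `ρ^{⊗ n}`. -/
def tpow (ρ : Matrix ι ι ℂ) (n : ℕ) : Matrix (Fin n → ι) (Fin n → ι) ℂ :=
  Matrix.of fun i j => ∏ t, ρ (i t) (j t)

end OneShot

/-! If `ρ ≤ l • δ` for an incoherent state `δ`, then `l • δ - ρ` is positive semidefinite of
trace `l - 1`. Hence `l ≥ 1`, which gives `C_max ρ ≥ 0`, and every entry of `l • δ - ρ` has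
modulus at most `l - 1`; off the diagonal these entries are `-ρ i j`. So if the feasible `l`
come arbitrarily close to `1`, then `ρ` is diagonal. Conversely an incoherent `ρ` is feasible
with `l = 1`, `δ = ρ`. The feasible set is nonempty (so its `sInf` is not the junk value `0`)
since `ρ ≤ 1`, which is `card ι` times the maximally mixed state. -/

namespace Matrix

variable {n 𝕜 : Type*} [RCLike 𝕜]

theorem PosSemidef.norm_apply_sq_le [DecidableEq n] {A : Matrix n n 𝕜} (hA : A.PosSemidef)
    (i j : n) : ‖A i j‖ ^ 2 ≤ RCLike.re (A i i) * RCLike.re (A j j) := by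
  have hdet := (hA.submatrix ![i, j]).det_nonneg
  simp only [det_fin_two, submatrix_apply, cons_val_zero, cons_val_one, ← hA.1.apply i j,
    RCLike.star_def, RCLike.conj_mul] at hdet
  have hre := (RCLike.nonneg_iff.mp hdet).1
  have him : RCLike.im (A i i) = 0 := (RCLike.nonneg_iff.mp hA.diag_nonneg).2
  simp only [map_sub, RCLike.mul_re, him, zero_mul, sub_zero] at hre
  norm_cast at hre
  rw [← hA.1.apply i j, norm_star]
  linarith

variable [Fintype n]

theorem PosSemidef.re_apply_le_re_trace {A : Matrix n n 𝕜} (hA : A.PosSemidef) (i : n) :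
    RCLike.re (A i i) ≤ RCLike.re A.trace := by
  rw [trace, map_sum]
  exact Finset.single_le_sum (f := fun j ↦ RCLike.re (A j j))
    (fun j _ ↦ (RCLike.nonneg_iff.mp hA.diag_nonneg).1) (Finset.mem_univ i)

theorem PosSemidef.norm_apply_le_re_trace [DecidableEq n] {A : Matrix n n 𝕜}
    (hA : A.PosSemidef) (i j : n) : ‖A i j‖ ≤ RCLike.re A.trace := by
  have hi := hA.re_apply_le_re_trace i
  have hj := hA.re_apply_le_re_trace j
  have hi0 := (RCLike.nonneg_iff.mp (hA.diag_nonneg (i := i))).1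
  have hj0 := (RCLike.nonneg_iff.mp (hA.diag_nonneg (i := j))).1
  refine (pow_le_pow_iff_left₀ (norm_nonneg _) (hi0.trans hi) two_ne_zero).mp ?_
  calc ‖A i j‖ ^ 2 ≤ RCLike.re (A i i) * RCLike.re (A j j) := hA.norm_apply_sq_le i j
    _ ≤ RCLike.re A.trace ^ 2 := by nlinarith

theorem PosSemidef.posSemidef_trace_smul_one_sub [DecidableEq n] {A : Matrix n n 𝕜}
    (hA : A.PosSemidef) : (A.trace • 1 - A).PosSemidef := by
  have htr : A.trace = ((∑ i, hA.1.eigenvalues i : ℝ) : 𝕜) := by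
    simp [hA.1.trace_eq_sum_eigenvalues]
  have hherm : (A.trace • 1 - A).IsHermitian :=
    (isHermitian_one.smul (by rw [htr]; exact RCLike.conj_ofReal _)).sub hA.1
  refine posSemidef_iff_isHermitian_and_spectrum_nonneg.mpr ⟨hherm, ?_⟩
  rw [← Algebra.algebraMap_eq_smul_one, ← spectrum.singleton_sub_eq,
    hA.1.spectrum_eq_image_range]
  rintro _ ⟨_, rfl, _, ⟨_, ⟨i, rfl⟩, rfl⟩, rfl⟩
  simp only [Set.mem_ofPred_eq, htr, ← RCLike.ofReal_sub, RCLike.ofReal_nonneg, sub_nonneg]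
  exact Finset.single_le_sum (fun j _ ↦ hA.eigenvalues_nonneg j) (Finset.mem_univ i)

end Matrix

namespace OneShot

open Matrix

variable {ι : Type*} [Fintype ι]

def cmaxFeasible (ρ : Matrix ι ι ℂ) : Set ℝ :=
  {l | 0 ≤ l ∧ ∃ δ, IsIncoherent δ ∧ (l • δ - ρ).PosSemidef}

theorem Cmax_eq_logb_sInf (ρ : Matrix ι ι ℂ) : Cmax ρ = Real.logb 2 (sInf (cmaxFeasible ρ)) :=
  rfl

theorem IsState.nonempty {ρ : Matrix ι ι ℂ} (hρ : IsState ρ) : Nonempty ι := by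
  obtain ⟨i, -, -⟩ := Finset.exists_ne_zero_of_sum_ne_zero (hρ.2 ▸ one_ne_zero : ρ.trace ≠ 0)
  exact ⟨i⟩

theorem IsState.trace_smul_sub {ρ δ : Matrix ι ι ℂ} (hρ : IsState ρ) (hδ : IsState δ) (l : ℝ) :
    (l • δ - ρ).trace = ((l - 1 : ℝ) : ℂ) := by
  rw [trace_sub, trace_smul, hδ.2, hρ.2]
  simp [Complex.real_smul]

theorem IsState.one_le_of_mem_cmaxFeasible {ρ : Matrix ι ι ℂ} (hρ : IsState ρ) {l : ℝ}
    (hl : l ∈ cmaxFeasible ρ) : 1 ≤ l := by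
  obtain ⟨-, δ, hδ, hpsd⟩ := hl
  have := hpsd.trace_nonneg
  rw [hρ.trace_smul_sub hδ.1, Complex.zero_le_real] at this
  linarith

variable [DecidableEq ι]

theorem isIncoherent_inv_card_smul_one [Nonempty ι] :
    IsIncoherent ((Fintype.card ι : ℂ)⁻¹ • (1 : Matrix ι ι ℂ)) := by
  have hcard : (Fintype.card ι : ℂ) ≠ 0 := by simp
  refine ⟨⟨PosSemidef.one.smul ?_, ?_⟩, isDiag_one.smul _⟩
  · exact inv_nonneg.mpr (Nat.cast_nonneg _)
  · rw [trace_smul, trace_one, smul_eq_mul, inv_mul_cancel₀ hcard]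

theorem IsState.card_mem_cmaxFeasible {ρ : Matrix ι ι ℂ} (hρ : IsState ρ) :
    (Fintype.card ι : ℝ) ∈ cmaxFeasible ρ := by
  have := hρ.nonempty
  refine ⟨Nat.cast_nonneg _, _, isIncoherent_inv_card_smul_one, ?_⟩
  have hscale : (Fintype.card ι : ℝ) • (Fintype.card ι : ℂ)⁻¹ • (1 : Matrix ι ι ℂ) =
      ρ.trace • 1 := by
    rw [hρ.2, ← Complex.coe_smul, smul_smul, Complex.ofReal_natCast, mul_inv_cancel₀ (by simp)]
  rw [hscale]
  exact hρ.1.posSemidef_trace_smul_one_sub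

theorem IsState.norm_apply_le_of_mem_cmaxFeasible {ρ : Matrix ι ι ℂ} (hρ : IsState ρ) {l : ℝ}
    (hl : l ∈ cmaxFeasible ρ) {i j : ι} (hij : i ≠ j) : ‖ρ i j‖ ≤ l - 1 := by
  obtain ⟨-, δ, hδ, hpsd⟩ := hl
  have := hpsd.norm_apply_le_re_trace i j
  rw [hρ.trace_smul_sub hδ.1] at this
  simpa [hδ.2 hij] using this

theorem IsState.one_le_sInf_cmaxFeasible {ρ : Matrix ι ι ℂ} (hρ : IsState ρ) :
    1 ≤ sInf (cmaxFeasible ρ) :=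
  le_csInf ⟨_, hρ.card_mem_cmaxFeasible⟩ fun _ ↦ hρ.one_le_of_mem_cmaxFeasible

theorem IsState.sInf_cmaxFeasible_eq_one_iff {ρ : Matrix ι ι ℂ} (hρ : IsState ρ) :
    sInf (cmaxFeasible ρ) = 1 ↔ IsIncoherent ρ := by
  refine ⟨fun h ↦ ⟨hρ, fun i j hij ↦ norm_eq_zero.mp ?_⟩, fun h ↦ ?_⟩
  · refine le_antisymm (le_of_forall_pos_lt_add fun ε hε ↦ ?_) (norm_nonneg _)
    obtain ⟨l, hl, hlt⟩ := exists_lt_of_csInf_lt ⟨_, hρ.card_mem_cmaxFeasible⟩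
      (h ▸ lt_add_of_pos_right 1 hε)
    linarith [hρ.norm_apply_le_of_mem_cmaxFeasible hl hij]
  · refine le_antisymm (csInf_le ⟨1, fun _ ↦ hρ.one_le_of_mem_cmaxFeasible⟩ ?_)
      hρ.one_le_sInf_cmaxFeasible
    exact ⟨zero_le_one, ρ, h, by simpa using PosSemidef.zero⟩

theorem IsState.Cmax_nonneg {ρ : Matrix ι ι ℂ} (hρ : IsState ρ) : 0 ≤ Cmax ρ :=
  Real.logb_nonneg one_lt_two hρ.one_le_sInf_cmaxFeasible

theorem IsState.Cmax_eq_zero_iff {ρ : Matrix ι ι ℂ} (hρ : IsState ρ) :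
    Cmax ρ = 0 ↔ IsIncoherent ρ := by
  rw [← hρ.sInf_cmaxFeasible_eq_one_iff, Cmax_eq_logb_sInf]
  refine ⟨fun h ↦ ?_, fun h ↦ by rw [h, Real.logb_one]⟩
  by_contra hne
  exact (Real.logb_pos one_lt_two
    (lt_of_le_of_ne hρ.one_le_sInf_cmaxFeasible (Ne.symm hne))).ne' h

theorem Cmax_faithful_general {d : ℕ} (ρ : Matrix (Fin d) (Fin d) ℂ) (hρ : IsState ρ) :
    0 ≤ Cmax ρ ∧ (Cmax ρ = 0 ↔ IsIncoherent ρ) :=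
  ⟨hρ.Cmax_nonneg, hρ.Cmax_eq_zero_iff⟩

/-- the coherence monotone `C_max` is faithful: for every state `ρ`,
`C_max(ρ) ≥ 0`, and `C_max(ρ) = 0` iff `ρ` is incoherent. -/
theorem Cmax_faithful {d : ℕ} (hd : 1 ≤ d) (ρ : Matrix (Fin d) (Fin d) ℂ) (hρ : IsState ρ) :
    0 ≤ Cmax ρ ∧ (Cmax ρ = 0 ↔ IsIncoherent ρ) :=
  Cmax_faithful_general ρ hρ

end OneShot
end

section
/- C_0 is monotone under incoherent operations: if Λ(ρ) = Σ_n K_n ρ K_n† is a completely positive trace-preserving map whose Kraus operators K_n are all incoherent-preserving, then for every state ρ one has C_0(Λ(ρ)) ≤ C_0(ρ). -/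
open scoped Matrix ComplexOrder

/-! An incoherent-preserving Kraus operator has at most one nonzero entry in each column, so
it never increases the number `T` of nonzero coefficients of a vector. Pushing a decomposition
`ρ = Σ_j p_j |ψ_j⟩⟨ψ_j|` through the Kraus operators writes the output as
`Σ_{n,j} |K_n √p_j ψ_j⟩⟨K_n √p_j ψ_j|`; discarding the zero vectors and normalising the others
gives a decomposition of the output whose vectors have no larger support. -/

namespace OneShot

open Matrix Finset

variable {ι κ : Type*}

theorem outer_eq_vecMulVec (ψ : ι → ℂ) : outer ψ = vecMulVec ψ (star ψ) := rfl

theorem trace_outer [Fintype ι] (ψ : ι → ℂ) :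
    (outer ψ).trace = ((∑ i, Complex.normSq (ψ i) : ℝ) : ℂ) := by
  simp [outer_eq_vecMulVec, dotProduct, Complex.mul_conj]

theorem outer_smul (a : ℂ) (ψ : ι → ℂ) : outer (a • ψ) = (a * star a) • outer ψ := by
  ext i j
  simp only [outer, of_apply, Matrix.smul_apply, Pi.smul_apply, smul_eq_mul, star_mul']
  ring

theorem outer_ofReal_sqrt_smul {r : ℝ} (hr : 0 ≤ r) (ψ : ι → ℂ) :
    outer (((√r : ℝ) : ℂ) • ψ) = r • outer ψ := by
  rw [outer_smul, Complex.star_def, Complex.conj_ofReal, ← Complex.ofReal_mul,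
    Real.mul_self_sqrt hr, Complex.coe_smul]

theorem mul_outer_mul_conjTranspose [Fintype ι] (K : Matrix κ ι ℂ) (ψ : ι → ℂ) :
    K * outer ψ * Kᴴ = outer (K *ᵥ ψ) := by
  rw [outer_eq_vecMulVec, mul_vecMulVec, vecMulVec_mul, ← star_mulVec]
  rfl

theorem T_smul_le [Fintype ι] (a : ℂ) (ψ : ι → ℂ) : T (a • ψ) ≤ T ψ :=
  card_le_card <| monotone_filter_right _ fun _ _ h => right_ne_zero_of_mul h

theorem T_le_card [Fintype ι] (ψ : ι → ℂ) : T ψ ≤ Fintype.card ι := card_filter_le _ _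

theorem T_pos [Fintype ι] {ψ : ι → ℂ} (hψ : ψ ≠ 0) : 0 < T ψ := by
  obtain ⟨i, hi⟩ := Function.ne_iff.1 hψ
  exact card_pos.2 ⟨i, mem_filter.2 ⟨mem_univ i, hi⟩⟩

theorem IncoherentPreserving.eq_of_ne_zero [Fintype ι] [DecidableEq ι] [Fintype κ]
    {K : Matrix κ ι ℂ} (hK : IncoherentPreserving K) {i : ι} {a b : κ}
    (ha : K a i ≠ 0) (hb : K b i ≠ 0) : a = b := by
  by_contra hab
  let D : Matrix ι ι ℂ := diagonal (Pi.single i 1)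
  have hD : IsIncoherent D := by
    refine ⟨⟨posSemidef_diagonal_iff.2 fun j => ?_, ?_⟩, isDiag_diagonal _⟩
    · by_cases h : j = i <;> simp [h]
    · simp [D, trace_diagonal]
  obtain ⟨c, -, δ, ⟨-, hδ⟩, heq⟩ := hK D hD
  have hentry : (K * D * Kᴴ) a b = K a i * star (K b i) := by
    rw [mul_apply, sum_eq_single i (fun j _ hj => by simp [D, mul_diagonal, hj]) (by simp)]
    simp [D, mul_diagonal]
  rw [heq, Matrix.smul_apply, hδ hab, smul_zero] at hentry
  exact mul_ne_zero ha (star_ne_zero.2 hb) hentry.symm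

theorem IncoherentPreserving.T_mulVec_le [Fintype ι] [DecidableEq ι] [Fintype κ]
    {K : Matrix κ ι ℂ} (hK : IncoherentPreserving K) (ψ : ι → ℂ) :
    T (K *ᵥ ψ) ≤ T ψ := by
  refine card_le_card_of_forall_subsingleton (fun k i => K k i ≠ 0) (fun k hk => ?_)
    fun i _ a ha b hb => hK.eq_of_ne_zero ha.2 hb.2
  obtain ⟨i, -, hi⟩ := exists_ne_zero_of_sum_ne_zero (mem_filter.1 hk).2
  exact ⟨i, mem_filter.2 ⟨mem_univ i, right_ne_zero_of_mul hi⟩, left_ne_zero_of_mul hi⟩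

theorem sum_normSq_eq_zero_iff [Fintype ι] {ψ : ι → ℂ} :
    ∑ i, Complex.normSq (ψ i) = 0 ↔ ψ = 0 := by
  simp [sum_eq_zero_iff_of_nonneg fun i _ => Complex.normSq_nonneg (ψ i), funext_iff]

noncomputable def normalize [Fintype ι] (ψ : ι → ℂ) : ι → ℂ :=
  (((√(∑ i, Complex.normSq (ψ i)))⁻¹ : ℝ) : ℂ) • ψ

theorem sum_normSq_normalize [Fintype ι] {ψ : ι → ℂ} (hψ : ψ ≠ 0) :
    ∑ i, Complex.normSq (normalize ψ i) = 1 := by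
  have hc := sum_normSq_eq_zero_iff.not.2 hψ
  simp only [normalize, Pi.smul_apply, smul_eq_mul, Complex.normSq_mul,
    Complex.normSq_ofReal, ← mul_sum]
  rw [← mul_inv, Real.mul_self_sqrt (sum_nonneg fun i _ => Complex.normSq_nonneg _),
    inv_mul_cancel₀ hc]

theorem smul_outer_normalize [Fintype ι] (ψ : ι → ℂ) :
    (∑ i, Complex.normSq (ψ i)) • outer (normalize ψ) = outer ψ := by
  by_cases hψ : ψ = 0
  · simp [hψ, outer_eq_vecMulVec]
  have hc := sum_normSq_eq_zero_iff.not.2 hψ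
  rw [normalize, ← Real.sqrt_inv, outer_ofReal_sqrt_smul, smul_smul, mul_inv_cancel₀ hc,
    one_smul]
  exact inv_nonneg.2 (sum_nonneg fun i _ => Complex.normSq_nonneg _)

theorem sum_comp_equivFin_symm_filter {α M : Type*} [Fintype α] [AddCommMonoid M]
    (P : α → Prop) [DecidablePred P] {f : α → M} (hf : ∀ x, ¬P x → f x = 0) :
    ∑ j, f ((univ.filter P).equivFin.symm j) = ∑ x, f x := by
  rw [Equiv.sum_comp (univ.filter P).equivFin.symm (fun x => f x), sum_coe_sort,
    sum_filter_of_ne fun x _ h => not_not.1 (mt (hf x) h)]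

theorem exists_decomposition_of_eq_sum_outer [Fintype ι] {α : Type*} [Fintype α]
    {ρ : Matrix ι ι ℂ} (w : α → ι → ℂ) (hρ : ρ = ∑ x, outer (w x)) (htr : ρ.trace = 1)
    {B : ℕ} (hB : ∀ x, T (w x) ≤ B) :
    ∃ n p ψ, IsDecomposition ρ n p ψ ∧ univ.sup (fun j => T (ψ j)) ≤ B := by
  classical
  let c : α → ℝ := fun x => ∑ i, Complex.normSq (w x i)
  have hc : ∀ x, ¬w x ≠ 0 → c x = 0 := fun x hx => sum_normSq_eq_zero_iff.2 (not_not.1 hx)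
  let e := (univ.filter fun x => w x ≠ 0).equivFin.symm
  have he : ∀ j, w (e j) ≠ 0 := fun j => (mem_filter.1 (e j).2).2
  refine ⟨_, fun j => c (e j), fun j => normalize (w (e j)),
    ⟨fun j => ?_, ?_, fun j => sum_normSq_normalize (he j), ?_⟩,
    Finset.sup_le fun j _ => (T_smul_le _ _).trans (hB _)⟩
  · exact (sum_nonneg fun i _ => Complex.normSq_nonneg _).lt_of_ne
      (Ne.symm (sum_normSq_eq_zero_iff.not.2 (he j)))
  · rw [sum_comp_equivFin_symm_filter _ hc]
    rw [hρ, trace_sum] at htr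
    simp only [trace_outer, ← Complex.ofReal_sum] at htr
    exact_mod_cast htr
  · have := sum_comp_equivFin_symm_filter (fun x => w x ≠ 0)
      (f := fun x => c x • outer (normalize (w x))) fun x hx => by simp [hc x hx]
    exact hρ.trans ((sum_congr rfl fun x _ => (smul_outer_normalize (w x)).symm).trans this.symm)

theorem trace_sum_mul_mul_conjTranspose [Fintype ι] [DecidableEq ι] [Fintype κ] {α : Type*}
    [Fintype α] (K : α → Matrix κ ι ℂ) (hK : ∑ m, (K m)ᴴ * K m = 1) (ρ : Matrix ι ι ℂ) :
    (∑ m, K m * ρ * (K m)ᴴ).trace = ρ.trace := by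
  simp_rw [trace_sum, trace_mul_cycle (K _), ← trace_sum, ← sum_mul, hK, one_mul]

theorem IsState.exists_decomposition [Fintype ι] {ρ : Matrix ι ι ℂ} (hρ : IsState ρ) :
    ∃ n p ψ, IsDecomposition ρ n p ψ := by
  obtain ⟨m, v, hv⟩ := posSemidef_iff_eq_sum_vecMulVec.1 hρ.1
  obtain ⟨n, p, ψ, hdec, -⟩ :=
    exists_decomposition_of_eq_sum_outer v hv hρ.2 fun i => T_le_card (v i)
  exact ⟨n, p, ψ, hdec⟩

section Decomposition

variable [Fintype ι] {ρ : Matrix ι ι ℂ} {n : ℕ} {p : Fin n → ℝ} {ψ : Fin n → ι → ℂ}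

theorem IsDecomposition.trace_eq_one (h : IsDecomposition ρ n p ψ) : ρ.trace = 1 := by
  obtain ⟨-, hp, hψ, rfl⟩ := h
  simp only [trace_sum, trace_smul, trace_outer, hψ, Complex.ofReal_one, Complex.real_smul,
    mul_one]
  exact_mod_cast hp

theorem IsDecomposition.eq_sum_outer (h : IsDecomposition ρ n p ψ) :
    ρ = ∑ j, outer (((√(p j) : ℝ) : ℂ) • ψ j) := by
  simp_rw [outer_ofReal_sqrt_smul (h.1 _).le]
  exact h.2.2.2

theorem IsDecomposition.sup_T_pos (h : IsDecomposition ρ n p ψ) :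
    0 < univ.sup fun j => T (ψ j) := by
  obtain ⟨-, hp, hψ, -⟩ := h
  obtain ⟨j⟩ : Nonempty (Fin n) := by
    by_contra hn
    simp [not_nonempty_iff.1 hn] at hp
  have hψj : ψ j ≠ 0 := fun h0 => one_ne_zero ((hψ j).symm.trans (sum_normSq_eq_zero_iff.2 h0))
  exact (T_pos hψj).trans_le (le_sup (f := fun j => T (ψ j)) (mem_univ j))

theorem C0_le_logb_sup_T (h : IsDecomposition ρ n p ψ) :
    C0 ρ ≤ Real.logb 2 (univ.sup fun j => T (ψ j) : ℕ) := by
  refine csInf_le ⟨0, ?_⟩ ⟨n, p, ψ, h, rfl⟩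
  rintro _ ⟨n, p, ψ, h, rfl⟩
  exact Real.logb_nonneg one_lt_two (Nat.one_le_cast.2 h.sup_T_pos)

theorem le_C0 (hρ : IsState ρ) {r : ℝ}
    (h : ∀ n p ψ, IsDecomposition ρ n p ψ → r ≤ Real.logb 2 (univ.sup fun j => T (ψ j) : ℕ)) :
    r ≤ C0 ρ := by
  obtain ⟨n, p, ψ, hdec⟩ := hρ.exists_decomposition
  refine le_csInf ⟨_, n, p, ψ, hdec, rfl⟩ ?_
  rintro _ ⟨n, p, ψ, hdec, rfl⟩
  exact h n p ψ hdec

theorem IsDecomposition.exists_kraus_image [DecidableEq ι] [Fintype κ] {α : Type*} [Fintype α]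
    {K : α → Matrix κ ι ℂ} (hK : ∀ m, IncoherentPreserving (K m))
    (hsum : ∑ m, (K m)ᴴ * K m = 1) (h : IsDecomposition ρ n p ψ) :
    ∃ n' p' ψ', IsDecomposition (∑ m, K m * ρ * (K m)ᴴ) n' p' ψ' ∧
      univ.sup (fun j => T (ψ' j)) ≤ univ.sup fun j => T (ψ j) := by
  refine exists_decomposition_of_eq_sum_outer
    (fun x : α × Fin n => K x.1 *ᵥ (((√(p x.2) : ℝ) : ℂ) • ψ x.2)) ?_ ?_ fun x => ?_
  · rw [Fintype.sum_prod_type, h.eq_sum_outer]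
    simp_rw [Matrix.mul_sum, Matrix.sum_mul, mul_outer_mul_conjTranspose]
  · rw [trace_sum_mul_mul_conjTranspose K hsum, h.trace_eq_one]
  · exact ((hK x.1).T_mulVec_le _).trans
      ((T_smul_le _ _).trans (le_sup (f := fun j => T (ψ j)) (mem_univ x.2)))

end Decomposition

/-- `C_0` is monotone under incoherent operations. -/
theorem C0_IO_monotone {d : ℕ} (N : ℕ) (K : Fin N → Matrix (Fin d) (Fin d) ℂ)
    (hK : ∀ n, IncoherentPreserving (K n)) (hsum : ∑ n, (K n)ᴴ * K n = 1)
    (ρ : Matrix (Fin d) (Fin d) ℂ) (hρ : IsState ρ) :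
    C0 (∑ n, K n * ρ * (K n)ᴴ) ≤ C0 ρ := by
  refine le_C0 hρ fun n p ψ hdec => ?_
  obtain ⟨n', p', ψ', hdec', hT⟩ := hdec.exists_kraus_image hK hsum
  refine (C0_le_logb_sup_T hdec').trans (Real.logb_le_logb_of_le one_lt_two ?_ ?_)
  · exact_mod_cast hdec'.sup_T_pos
  · exact_mod_cast hT

end OneShot
end
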